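/- arXiv:2403.17680 — 2 statements merged into one kernel-verified Lean document; each statement's English description precedes it below -/
import Mathlib

section
/- The 4×4 integer matrices R̄ = [[1,1,1,0],[-1,0,0,0],[1,0,0,1],[0,0,-1,0]] and T̄ = [[2,-1,0,0],[1,0,0,0],[0,0,2,-1],[0,0,1,0]], reduced mod 2, generate a dihedral subgroup of order 10 in GL₄(ℤ/2ℤ). -/
/-- Monodromy matrix of the rotation of the regular decagon, mod 2. -/
def decagonR : Matrix (Fin 4) (Fin 4) (ZMod 2) :=
  !![1, 1, 1, 0; -1, 0, 0, 0; 1, 0, 0, 1; 0, 0, -1, 0]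

/-- Monodromy matrix of the parabolic generator of the decagon Veech group, mod 2. -/
def decagonT : Matrix (Fin 4) (Fin 4) (ZMod 2) :=
  !![2, -1, 0, 0; 1, 0, 0, 0; 0, 0, 2, -1; 0, 0, 1, 0]

private def Amat : Matrix (Fin 4) (Fin 4) (ZMod 2) := !![1,1,1,0; 1,0,0,0; 1,0,0,1; 0,0,1,0]
private def Ainv : Matrix (Fin 4) (Fin 4) (ZMod 2) := !![0,1,0,0; 1,1,0,1; 0,0,0,1; 0,1,1,0]
private def Bmat : Matrix (Fin 4) (Fin 4) (ZMod 2) := !![0,1,0,0; 1,0,0,0; 0,0,0,1; 0,0,1,0]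

private def AU : GL (Fin 4) (ZMod 2) := ⟨Amat, Ainv, by decide, by decide⟩
private def BU : GL (Fin 4) (ZMod 2) := ⟨Bmat, Bmat, by decide, by decide⟩

private def φfun : DihedralGroup 5 → GL (Fin 4) (ZMod 2)
  | DihedralGroup.r i => AU ^ i.val
  | DihedralGroup.sr i => BU * AU ^ i.val

private def φ : DihedralGroup 5 →* GL (Fin 4) (ZMod 2) where
  toFun := φfun
  map_one' := by decide
  map_mul' := by decide

private lemma φinj : Function.Injective φ := by decide

theorem decagon_monodromy_mod_two_dihedral :
    ∃ R T : GL (Fin 4) (ZMod 2),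
      (R : Matrix (Fin 4) (Fin 4) (ZMod 2)) = decagonR ∧
      (T : Matrix (Fin 4) (Fin 4) (ZMod 2)) = decagonT ∧
      Nat.card (Subgroup.closure {R, T} : Subgroup (GL (Fin 4) (ZMod 2))) = 10 ∧
      Nonempty ((Subgroup.closure {R, T} : Subgroup (GL (Fin 4) (ZMod 2))) ≃*
        DihedralGroup 5) := by
  refine ⟨AU, BU, by decide, by decide, ?_⟩
  have hA : φ (DihedralGroup.r 1) = AU := by decide
  have hB : φ (DihedralGroup.sr 0) = BU := by decide
  have hclos : Subgroup.closure {AU, BU} = φ.range := by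
    apply le_antisymm
    · rw [Subgroup.closure_le]
      rintro x (rfl | rfl)
      · exact ⟨DihedralGroup.r 1, hA⟩
      · exact ⟨DihedralGroup.sr 0, hB⟩
    · have hAmem : AU ∈ Subgroup.closure {AU, BU} :=
        Subgroup.subset_closure (by simp)
      have hBmem : BU ∈ Subgroup.closure {AU, BU} :=
        Subgroup.subset_closure (by simp)
      rintro x ⟨d, rfl⟩
      cases d with
      | r i => exact pow_mem hAmem i.val
      | sr i => exact mul_mem hBmem (pow_mem hAmem i.val)
  rw [hclos]
  have e : DihedralGroup 5 ≃* φ.range := MonoidHom.ofInjective φinj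
  constructor
  · rw [← Nat.card_congr e.toEquiv]
    simp [Nat.card_eq_fintype_card, DihedralGroup.card]
  · exact ⟨e.symm⟩
end

section
/- The natural action of the group generated by the mod-2 reductions of R̄ = [[1,1,1,0],[-1,0,0,0],[1,0,0,1],[0,0,-1,0]] and T̄ = [[2,-1,0,0],[1,0,0,0],[0,0,2,-1],[0,0,1,0]] on the 15 nonzero vectors of (ℤ/2ℤ)⁴ has exactly three orbits, each of size five. -/
namespace DecagonAux

abbrev V := Fin 4 → ZMod 2

def Rinv : Matrix (Fin 4) (Fin 4) (ZMod 2) :=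
  !![0, 1, 0, 0; 1, 1, 0, 1; 0, 0, 0, 1; 0, 1, 1, 0]

lemma hRRi : decagonR * Rinv = 1 := by decide
lemma hRiR : Rinv * decagonR = 1 := by decide
lemma hTT : decagonT * decagonT = 1 := by decide

def Ru : GL (Fin 4) (ZMod 2) := ⟨decagonR, Rinv, hRRi, hRiR⟩
def Tu : GL (Fin 4) (ZMod 2) := ⟨decagonT, decagonT, hTT, hTT⟩

def S1 : Finset V := {![0,0,0,1], ![0,0,1,0], ![0,1,1,0], ![1,0,0,1], ![1,1,0,0]}
def S2 : Finset V := {![0,0,1,1], ![0,1,0,1], ![0,1,1,1], ![1,0,1,0], ![1,0,1,1]}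
def S3 : Finset V := {![0,1,0,0], ![1,0,0,0], ![1,1,0,1], ![1,1,1,0], ![1,1,1,1]}

def G : Subgroup (GL (Fin 4) (ZMod 2)) := Subgroup.closure {Ru, Tu}

def orbit (v : V) : Set V :=
  {w | ∃ M ∈ G, w = (M : Matrix (Fin 4) (Fin 4) (ZMod 2)).mulVec v}

lemma hRuG : Ru ∈ G := Subgroup.subset_closure (Set.mem_insert _ _)
lemma hTuG : Tu ∈ G := Subgroup.subset_closure (Set.mem_insert_of_mem _ rfl)

lemma invariance (S : Finset V)
    (hR : ∀ w ∈ S, decagonR.mulVec w ∈ S)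
    (hT : ∀ w ∈ S, decagonT.mulVec w ∈ S) :
    ∀ M ∈ G, ∀ w ∈ S, (M : Matrix (Fin 4) (Fin 4) (ZMod 2)).mulVec w ∈ S := by
  intro M hM
  induction hM using Subgroup.closure_induction with
  | mem x hx =>
    rcases hx with hx | hx
    · subst hx; exact hR
    · rw [Set.mem_singleton_iff] at hx; subst hx; exact hT
  | one => intro w hw; simpa using hw
  | mul x y hx hy ihx ihy =>
    intro w hw
    have : ((x * y : GL (Fin 4) (ZMod 2)) : Matrix (Fin 4) (Fin 4) (ZMod 2)).mulVec w
        = (x : Matrix (Fin 4) (Fin 4) (ZMod 2)).mulVec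
            ((y : Matrix (Fin 4) (Fin 4) (ZMod 2)).mulVec w) := by
      rw [Units.val_mul, Matrix.mulVec_mulVec]
    rw [this]
    exact ihx _ (ihy _ hw)
  | inv x hx ihx =>
    intro w hw
    -- x maps S into S injectively, hence bijectively
    have hinj : Function.Injective fun u : {u // u ∈ S} =>
        (⟨(x : Matrix (Fin 4) (Fin 4) (ZMod 2)).mulVec u.1, ihx _ u.2⟩ : {u // u ∈ S}) := by
      intro a b hab
      have h1 : (x : Matrix (Fin 4) (Fin 4) (ZMod 2)).mulVec a.1
          = (x : Matrix (Fin 4) (Fin 4) (ZMod 2)).mulVec b.1 := congrArg Subtype.val hab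
      have h2 : ((x⁻¹ : GL (Fin 4) (ZMod 2)) : Matrix (Fin 4) (Fin 4) (ZMod 2)).mulVec
            ((x : Matrix (Fin 4) (Fin 4) (ZMod 2)).mulVec a.1)
          = ((x⁻¹ : GL (Fin 4) (ZMod 2)) : Matrix (Fin 4) (Fin 4) (ZMod 2)).mulVec
            ((x : Matrix (Fin 4) (Fin 4) (ZMod 2)).mulVec b.1) := by rw [h1]
      rw [Matrix.mulVec_mulVec, Matrix.mulVec_mulVec] at h2
      have hxi : ((x⁻¹ : GL (Fin 4) (ZMod 2)) : Matrix (Fin 4) (Fin 4) (ZMod 2))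
          * (x : Matrix (Fin 4) (Fin 4) (ZMod 2)) = 1 := Units.inv_mul x
      rw [hxi, Matrix.one_mulVec, Matrix.one_mulVec] at h2
      exact Subtype.ext h2
    have hsurj := Finite.surjective_of_injective hinj
    obtain ⟨u, hu⟩ := hsurj ⟨w, hw⟩
    have hu' : (x : Matrix (Fin 4) (Fin 4) (ZMod 2)).mulVec u.1 = w :=
      congrArg Subtype.val hu
    have : ((x⁻¹ : GL (Fin 4) (ZMod 2)) : Matrix (Fin 4) (Fin 4) (ZMod 2)).mulVec w = u.1 := by
      rw [← hu', Matrix.mulVec_mulVec, Units.inv_mul x, Matrix.one_mulVec]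
    rw [this]
    exact u.2

lemma orbit_subset (S : Finset V)
    (hR : ∀ w ∈ S, decagonR.mulVec w ∈ S)
    (hT : ∀ w ∈ S, decagonT.mulVec w ∈ S)
    {v : V} (hv : v ∈ S) : orbit v ⊆ ↑S := by
  rintro w ⟨M, hM, rfl⟩
  exact invariance S hR hT M hM v hv

lemma orbit_eq_of_mem {v w : V} (h : w ∈ orbit v) : orbit v = orbit w := by
  obtain ⟨M, hM, rfl⟩ := h
  ext u
  constructor
  · rintro ⟨N, hN, rfl⟩
    refine ⟨N * M⁻¹, mul_mem hN (inv_mem hM), ?_⟩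
    rw [Units.val_mul, Matrix.mulVec_mulVec, mul_assoc, Units.inv_mul, mul_one]
  · rintro ⟨N, hN, rfl⟩
    exact ⟨N * M, mul_mem hN hM, by rw [Units.val_mul, Matrix.mulVec_mulVec]⟩

lemma mem_orbit_self (v : V) : v ∈ orbit v :=
  ⟨1, one_mem _, by simp⟩

lemma orbit1 : orbit ![0,0,0,1] = ↑S1 := by
  apply Set.Subset.antisymm
  · exact orbit_subset S1 (by decide) (by decide) (by decide)
  · intro w hw
    have hw' : w ∈ _ := Finset.mem_coe.mp hw
    fin_cases hw'
    · exact mem_orbit_self _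
    · exact ⟨Ru, hRuG, by decide⟩
    · exact ⟨Tu * Ru * Ru, mul_mem (mul_mem hTuG hRuG) hRuG, by decide⟩
    · exact ⟨Ru * Ru, mul_mem hRuG hRuG, by decide⟩
    · exact ⟨Ru * Ru * Ru, mul_mem (mul_mem hRuG hRuG) hRuG, by decide⟩

lemma orbit2 : orbit ![0,0,1,1] = ↑S2 := by
  apply Set.Subset.antisymm
  · exact orbit_subset S2 (by decide) (by decide) (by decide)
  · intro w hw
    have hw' : w ∈ _ := Finset.mem_coe.mp hw
    fin_cases hw'
    · exact mem_orbit_self _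
    · exact ⟨Ru * Ru, mul_mem hRuG hRuG, by decide⟩
    · exact ⟨Tu * Ru, mul_mem hTuG hRuG, by decide⟩
    · exact ⟨Ru * Ru * Ru, mul_mem (mul_mem hRuG hRuG) hRuG, by decide⟩
    · exact ⟨Ru, hRuG, by decide⟩

lemma orbit3 : orbit ![0,1,0,0] = ↑S3 := by
  apply Set.Subset.antisymm
  · exact orbit_subset S3 (by decide) (by decide) (by decide)
  · intro w hw
    have hw' : w ∈ _ := Finset.mem_coe.mp hw
    fin_cases hw'
    · exact mem_orbit_self _
    · exact ⟨Ru, hRuG, by decide⟩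
    · exact ⟨Tu * Ru * Ru, mul_mem (mul_mem hTuG hRuG) hRuG, by decide⟩
    · exact ⟨Ru * Ru, mul_mem hRuG hRuG, by decide⟩
    · exact ⟨Ru * Ru * Ru, mul_mem (mul_mem hRuG hRuG) hRuG, by decide⟩

lemma cover : ∀ v : V, v ≠ 0 → v ∈ S1 ∨ v ∈ S2 ∨ v ∈ S3 := by decide

lemma orbit_classify (v : V) (hv : v ≠ 0) :
    orbit v = ↑S1 ∨ orbit v = ↑S2 ∨ orbit v = ↑S3 := by
  rcases cover v hv with h | h | h
  · left
    rw [← orbit1]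
    exact (orbit_eq_of_mem (orbit1 ▸ (Finset.mem_coe.mpr h))).symm
  · right; left
    rw [← orbit2]
    exact (orbit_eq_of_mem (orbit2 ▸ (Finset.mem_coe.mpr h))).symm
  · right; right
    rw [← orbit3]
    exact (orbit_eq_of_mem (orbit3 ▸ (Finset.mem_coe.mpr h))).symm

lemma S12 : (↑S1 : Set V) ≠ ↑S2 := by
  intro h
  exact absurd (Finset.coe_injective h) (by decide)

lemma S13 : (↑S1 : Set V) ≠ ↑S3 := by
  intro h
  exact absurd (Finset.coe_injective h) (by decide)

lemma S23 : (↑S2 : Set V) ≠ ↑S3 := by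
  intro h
  exact absurd (Finset.coe_injective h) (by decide)

end DecagonAux

open DecagonAux in
theorem decagon_monodromy_three_orbits :
    ∃ R T : GL (Fin 4) (ZMod 2),
      (R : Matrix (Fin 4) (Fin 4) (ZMod 2)) = decagonR ∧
      (T : Matrix (Fin 4) (Fin 4) (ZMod 2)) = decagonT ∧
      Nat.card {s : Set (Fin 4 → ZMod 2) | ∃ v : Fin 4 → ZMod 2, v ≠ 0 ∧
        s = {w | ∃ M ∈ Subgroup.closure ({R, T} : Set (GL (Fin 4) (ZMod 2))),
          w = (M : Matrix (Fin 4) (Fin 4) (ZMod 2)).mulVec v}} = 3 ∧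
      ∀ v : Fin 4 → ZMod 2, v ≠ 0 →
        Nat.card {w | ∃ M ∈ Subgroup.closure ({R, T} : Set (GL (Fin 4) (ZMod 2))),
          w = (M : Matrix (Fin 4) (Fin 4) (ZMod 2)).mulVec v} = 5 := by
  refine ⟨Ru, Tu, rfl, rfl, ?_, ?_⟩
  · have hset : {s : Set (Fin 4 → ZMod 2) | ∃ v : Fin 4 → ZMod 2, v ≠ 0 ∧
        s = {w | ∃ M ∈ Subgroup.closure ({Ru, Tu} : Set (GL (Fin 4) (ZMod 2))),
          w = (M : Matrix (Fin 4) (Fin 4) (ZMod 2)).mulVec v}}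
        = {(↑S1 : Set V), ↑S2, ↑S3} := by
      ext s
      constructor
      · rintro ⟨v, hv, rfl⟩
        rcases orbit_classify v hv with h | h | h
        · exact h ▸ Set.mem_insert _ _
        · exact h ▸ Set.mem_insert_of_mem _ (Set.mem_insert _ _)
        · exact h ▸ Set.mem_insert_of_mem _ (Set.mem_insert_of_mem _ rfl)
      · rintro (rfl | rfl | rfl)
        · exact ⟨![0,0,0,1], by decide, orbit1.symm⟩
        · exact ⟨![0,0,1,1], by decide, orbit2.symm⟩
        · exact ⟨![0,1,0,0], by decide, orbit3.symm⟩
    rw [hset, Nat.card_coe_set_eq,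
      Set.ncard_insert_of_notMem (by rintro (h | h); exacts [S12 h, S13 h]) (Set.toFinite _),
      Set.ncard_pair S23]
  · intro v hv
    have : {w | ∃ M ∈ Subgroup.closure ({Ru, Tu} : Set (GL (Fin 4) (ZMod 2))),
        w = (M : Matrix (Fin 4) (Fin 4) (ZMod 2)).mulVec v} = orbit v := rfl
    rw [this]
    rcases orbit_classify v hv with h | h | h <;>
      rw [h, Nat.card_coe_set_eq, Set.ncard_coe_finset] <;> decide
end
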